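/- arXiv:2604.05155 — 4 statements merged into one kernel-verified Lean document; each statement's English description precedes it below -/
import Mathlib

section
/- Let T > 0, let m ≥ 1 be an integer, let λ ≥ 1, τ ≥ 1 and p ∈ [0,1], and set σ = τλ²·exp(λ(6m − 4)). Let θ(t) = 1 + (1 − 4t/T)^σ for t ∈ [0, T/4]. Then for every t ∈ [0, T/4], τ·|θ'(t)|·(λ·exp(6λ(m+1)) − exp(λ(p + 6m))) ≤ (4/T)·τ²·λ³·exp(2λ(6m+1)). -/
/-- For `T > 0`, integer `m ≥ 1`, `λ ≥ 1`, `τ ≥ 1`, `p ∈ [0,1]`,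
`σ = τλ²·exp(λ(6m − 4))` and `θ(t) = 1 + (1 − 4t/T)^σ` on `[0, T/4]`, one has
`τ·|θ'(t)|·(λ·exp(6λ(m+1)) − exp(λ(p + 6m))) ≤ (4/T)·τ²·λ³·exp(2λ(6m+1))`
for every `t ∈ [0, T/4]`. -/
theorem stmt5 (T : ℝ) (hT : 0 < T) (m : ℕ) (hm : 1 ≤ m)
    (lam τ p : ℝ) (hlam : 1 ≤ lam) (hτ : 1 ≤ τ) (hp0 : 0 ≤ p) (hp1 : p ≤ 1)
    (σ : ℝ) (hσ : σ = τ * lam ^ 2 * Real.exp (lam * (6 * (m : ℝ) - 4)))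
    (θ : ℝ → ℝ) (hθ : ∀ t, θ t = 1 + (1 - 4 * t / T) ^ σ) :
    ∀ t ∈ Set.Icc (0 : ℝ) (T / 4),
      τ * |deriv θ t| *
          (lam * Real.exp (6 * lam * ((m : ℝ) + 1))
            - Real.exp (lam * (p + 6 * (m : ℝ))))
        ≤ (4 / T) * τ ^ 2 * lam ^ 3 * Real.exp (2 * lam * (6 * (m : ℝ) + 1)) := by
  have hm1 : (1 : ℝ) ≤ (m : ℝ) := by exact_mod_cast hm
  have hexp1 : (1 : ℝ) ≤ Real.exp (lam * (6 * (m : ℝ) - 4)) := by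
    apply Real.one_le_exp
    nlinarith
  have hl2 : (1 : ℝ) ≤ lam ^ 2 := by nlinarith [sq_nonneg (lam - 1)]
  have hσ1 : (1 : ℝ) ≤ σ := by
    rw [hσ]
    nlinarith [hτ, hl2, hexp1, mul_le_mul hτ hl2 zero_le_one (le_trans zero_le_one hτ)]
  intro t ht
  obtain ⟨ht0, ht1⟩ := ht
  set x : ℝ := 1 - 4 * t / T with hxdef
  have hx0 : 0 ≤ x := by
    have : 4 * t / T ≤ 1 := by
      rw [div_le_one hT]; linarith
    simp [hxdef]; linarith
  have hx1 : x ≤ 1 := by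
    have : 0 ≤ 4 * t / T := by positivity
    simp [hxdef]; linarith
  -- derivative computation
  have hinner : HasDerivAt (fun s : ℝ => 1 - 4 * s / T) (-(4 / T)) t := by
    have h1 : HasDerivAt (fun s : ℝ => 4 * s / T) (4 / T) t := by
      simpa [mul_comm, mul_div_assoc] using
        ((hasDerivAt_id t).const_mul (4 : ℝ)).div_const T
    simpa using h1.const_sub 1
  have hpow : HasDerivAt (fun s : ℝ => (1 - 4 * s / T) ^ σ)
      (σ * x ^ (σ - 1) * (-(4 / T))) t := by
    have h2 := (Real.hasDerivAt_rpow_const (x := x) (p := σ) (Or.inr hσ1)).comp t hinner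
    simpa [hxdef, Function.comp_def, mul_comm, mul_assoc, mul_left_comm] using h2
  have hderiv : HasDerivAt θ (σ * x ^ (σ - 1) * (-(4 / T))) t := by
    have h3 := hpow.const_add (1 : ℝ)
    have : θ = fun s : ℝ => 1 + (1 - 4 * s / T) ^ σ := funext hθ
    rw [this]
    simpa using h3
  have hD : deriv θ t = σ * x ^ (σ - 1) * (-(4 / T)) := hderiv.deriv
  have hσ0 : 0 ≤ σ := le_trans zero_le_one hσ1
  have hxp0 : 0 ≤ x ^ (σ - 1) := Real.rpow_nonneg hx0 _
  have hxp1 : x ^ (σ - 1) ≤ 1 := Real.rpow_le_one hx0 hx1 (by linarith)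
  have habs : |deriv θ t| = σ * x ^ (σ - 1) * (4 / T) := by
    rw [hD, abs_mul, abs_neg, abs_of_nonneg (by positivity : (0:ℝ) ≤ 4 / T),
      abs_of_nonneg (by positivity : (0:ℝ) ≤ σ * x ^ (σ - 1))]
  rw [habs]
  -- exponential comparisons
  have hBpos : 0 < Real.exp (lam * (p + 6 * (m : ℝ))) := Real.exp_pos _
  have hE : Real.exp (lam * (6 * (m : ℝ) - 4)) * Real.exp (6 * lam * ((m : ℝ) + 1))
      = Real.exp (2 * lam * (6 * (m : ℝ) + 1)) := by
    rw [← Real.exp_add]; ring_nf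
  have hA0 : 0 < Real.exp (6 * lam * ((m : ℝ) + 1)) := Real.exp_pos _
  have hT4 : 0 < 4 / T := by positivity
  have key : τ * (σ * x ^ (σ - 1) * (4 / T)) *
      (lam * Real.exp (6 * lam * ((m : ℝ) + 1)))
      ≤ (4 / T) * τ ^ 2 * lam ^ 3 * Real.exp (2 * lam * (6 * (m : ℝ) + 1)) := by
    have hτ0 : (0:ℝ) < τ := by linarith
    have hl0 : (0:ℝ) < lam := by linarith
    have hP : (0:ℝ) ≤ τ * σ * (4 / T) * (lam * Real.exp (6 * lam * ((m : ℝ) + 1))) := by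
      positivity
    calc τ * (σ * x ^ (σ - 1) * (4 / T)) * (lam * Real.exp (6 * lam * ((m : ℝ) + 1)))
        = (τ * σ * (4 / T) * (lam * Real.exp (6 * lam * ((m : ℝ) + 1)))) * x ^ (σ - 1) := by
          ring
      _ ≤ (τ * σ * (4 / T) * (lam * Real.exp (6 * lam * ((m : ℝ) + 1)))) * 1 :=
          mul_le_mul_of_nonneg_left hxp1 hP
      _ = (4 / T) * τ ^ 2 * lam ^ 3 * Real.exp (2 * lam * (6 * (m : ℝ) + 1)) := by
          rw [hσ, ← hE]; ring
  have step : τ * (σ * x ^ (σ - 1) * (4 / T)) *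
      (lam * Real.exp (6 * lam * ((m : ℝ) + 1)) - Real.exp (lam * (p + 6 * (m : ℝ))))
      ≤ τ * (σ * x ^ (σ - 1) * (4 / T)) *
      (lam * Real.exp (6 * lam * ((m : ℝ) + 1))) := by
    apply mul_le_mul_of_nonneg_left (by linarith) (by positivity)
  linarith
end

section
/- Let T > 0, let m ≥ 1 be an integer, let λ ≥ 1, τ ≥ 1 and p ∈ [0,1], and set σ = τλ²·exp(λ(6m − 4)). Let θ(t) = 1 + (1 − 4t/T)^σ for t ∈ [0, T/4]. Then for every t ∈ [0, T/4], τ·|θ''(t)|·(λ·exp(6λ(m+1)) − exp(λ(p + 6m))) ≤ (16/T²)·τ³·λ³·exp(18λm). -/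
/-- For `T > 0`, integer `m ≥ 1`, `λ ≥ 1`, `τ ≥ 1`, `p ∈ [0,1]`,
`σ = τλ²·exp(λ(6m − 4))` and `θ(t) = 1 + (1 − 4t/T)^σ` on `[0, T/4]`, one has
`τ·|θ''(t)|·(λ·exp(6λ(m+1)) − exp(λ(p + 6m))) ≤ (16/T²)·τ³·λ³·exp(18λm)`
for every `t ∈ [0, T/4]`. -/
theorem stmt6 (T : ℝ) (hT : 0 < T) (m : ℕ) (hm : 1 ≤ m)
    (lam τ p : ℝ) (hlam : 1 ≤ lam) (hτ : 1 ≤ τ) (hp0 : 0 ≤ p) (hp1 : p ≤ 1)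
    (σ : ℝ) (hσ : σ = τ * lam ^ 2 * Real.exp (lam * (6 * (m : ℝ) - 4)))
    (θ : ℝ → ℝ) (hθ : ∀ t, θ t = 1 + (1 - 4 * t / T) ^ σ) :
    ∀ t ∈ Set.Icc (0 : ℝ) (T / 4),
      τ * |deriv (deriv θ) t| *
          (lam * Real.exp (6 * lam * ((m : ℝ) + 1))
            - Real.exp (lam * (p + 6 * (m : ℝ))))
        ≤ (16 / T ^ 2) * τ ^ 3 * lam ^ 3 * Real.exp (18 * lam * (m : ℝ)) := by
  intro t ht
  obtain ⟨ht0, ht1⟩ := ht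
  have hm1 : (1:ℝ) ≤ (m:ℝ) := by exact_mod_cast hm
  have hσ2 : 2 ≤ σ := by
    rw [hσ]
    have h1 : (2:ℝ) ≤ lam * (6*(m:ℝ) - 4) := by nlinarith
    have h2 : Real.exp 2 ≤ Real.exp (lam * (6*(m:ℝ)-4)) := Real.exp_le_exp.2 h1
    have h3 : (2:ℝ) ≤ Real.exp 2 := by
      have := Real.add_one_le_exp (2:ℝ); linarith
    have h4 : (1:ℝ) ≤ τ * lam^2 := by nlinarith
    have h5 : Real.exp (lam * (6*(m:ℝ)-4)) ≤ τ * lam^2 * Real.exp (lam * (6*(m:ℝ)-4)) :=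
      le_mul_of_one_le_left (le_of_lt (Real.exp_pos _)) h4
    linarith
  have hθ' : θ = fun s => 1 + (1 - 4 * s / T) ^ σ := funext hθ
  have hg : ∀ s : ℝ, HasDerivAt (fun s : ℝ => 1 - 4 * s / T) (-(4/T)) s := by
    intro s
    have h4 : HasDerivAt (fun s : ℝ => 4 * s / T) (4/T) s := by
      simpa using ((hasDerivAt_id s).const_mul (4:ℝ)).div_const T
    simpa using h4.const_sub 1
  have hd1 : deriv θ = fun s => σ * (1 - 4 * s / T) ^ (σ - 1) * (-(4/T)) := by
    funext s
    have h := (Real.hasDerivAt_rpow_const (p := σ) (x := 1 - 4*s/T)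
      (Or.inr (by linarith))).comp s (hg s)
    have h2 : HasDerivAt θ (σ * (1 - 4*s/T) ^ (σ-1) * (-(4/T))) s := by
      rw [hθ']
      simpa [mul_comm, mul_assoc] using h.const_add 1
    exact h2.deriv
  have hd2 : HasDerivAt (deriv θ)
      (σ * ((σ-1) * (1 - 4*t/T) ^ (σ-2) * (-(4/T))) * (-(4/T))) t := by
    rw [hd1]
    have h := (Real.hasDerivAt_rpow_const (p := σ - 1) (x := 1 - 4*t/T)
      (Or.inr (by linarith))).comp t (hg t)
    have h2 : HasDerivAt (fun s : ℝ => (1 - 4*s/T) ^ (σ-1))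
        ((σ-1) * (1 - 4*t/T) ^ (σ-1-1) * (-(4/T))) t := by
      simpa [mul_comm, mul_assoc, Function.comp_def] using h
    have h3 := (h2.const_mul σ).mul_const (-(4/T))
    simpa [mul_assoc, show σ - 1 - 1 = σ - 2 by ring] using h3
  set u := 1 - 4 * t / T with hu
  have hu0 : 0 ≤ u := by
    have h5 : 4 * t / T ≤ 1 := by
      rw [div_le_one hT]; linarith
    simp only [hu]; linarith
  have hu1 : u ≤ 1 := by
    have h6 : 0 ≤ 4 * t / T := by positivity
    simp only [hu]; linarith
  have hup : (0:ℝ) ≤ u ^ (σ - 2) := Real.rpow_nonneg hu0 _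
  have hup1 : u ^ (σ - 2) ≤ 1 := Real.rpow_le_one hu0 hu1 (by linarith)
  have hD : deriv (deriv θ) t = σ * ((σ-1) * u ^ (σ-2) * (-(4/T))) * (-(4/T)) := hd2.deriv
  rw [hD]
  have hσpos : (0:ℝ) < σ := by linarith
  have h16 : (0:ℝ) < 16/T^2 := by positivity
  have hXnn : (0:ℝ) ≤ σ * (σ-1) * u ^ (σ-2) * (16/T^2) :=
    mul_nonneg (mul_nonneg (mul_nonneg hσpos.le (by linarith)) hup) h16.le
  have habs : |σ * ((σ-1) * u ^ (σ-2) * (-(4/T))) * (-(4/T))|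
      = σ * (σ-1) * u ^ (σ-2) * (16/T^2) := by
    rw [abs_of_nonneg]
    · field_simp; ring
    · have heq : σ * ((σ-1) * u ^ (σ-2) * (-(4/T))) * (-(4/T))
          = σ * (σ-1) * u ^ (σ-2) * (16/T^2) := by field_simp; ring
      rw [heq]; exact hXnn
  rw [habs]
  have hF : lam * Real.exp (6 * lam * ((m:ℝ) + 1)) - Real.exp (lam * (p + 6*(m:ℝ)))
      ≤ lam * Real.exp (6 * lam * ((m:ℝ) + 1)) := by
    have := Real.exp_pos (lam * (p + 6*(m:ℝ))); linarith
  have hθnn : (0:ℝ) ≤ τ * (σ * (σ-1) * u ^ (σ-2) * (16/T^2)) :=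
    mul_nonneg (by linarith) hXnn
  have hE : (0:ℝ) ≤ lam * Real.exp (6 * lam * ((m:ℝ) + 1)) := by positivity
  have key : σ * (σ-1) * u ^ (σ-2) * (16/T^2) ≤ σ * σ * 1 * (16/T^2) := by
    have : σ * (σ-1) * u ^ (σ-2) ≤ σ * σ * 1 := by nlinarith
    exact mul_le_mul_of_nonneg_right this h16.le
  have ha : lam ≤ Real.exp lam := by linarith [Real.add_one_le_exp lam]
  have hb : Real.exp lam * Real.exp lam = Real.exp (2*lam) := by
    rw [← Real.exp_add]; ring_nf
  have hlam2 : lam^2 ≤ Real.exp (2*lam) := by nlinarith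
  have hE3 : Real.exp (18 * lam * (m:ℝ)) =
      Real.exp (lam * (6*(m:ℝ)-4)) * Real.exp (lam * (6*(m:ℝ)-4)) *
        Real.exp (6 * lam * ((m:ℝ)+1)) * Real.exp (2*lam) := by
    rw [← Real.exp_add, ← Real.exp_add, ← Real.exp_add]
    congr 1; ring
  have hkey : lam^5 * (Real.exp (lam * (6*(m:ℝ)-4)) * Real.exp (lam * (6*(m:ℝ)-4)) *
      Real.exp (6 * lam * ((m:ℝ)+1))) ≤ lam^3 * Real.exp (18 * lam * (m:ℝ)) := by
    calc lam^5 * (Real.exp (lam * (6*(m:ℝ)-4)) * Real.exp (lam * (6*(m:ℝ)-4)) *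
          Real.exp (6 * lam * ((m:ℝ)+1)))
        = (lam^3 * (Real.exp (lam * (6*(m:ℝ)-4)) * Real.exp (lam * (6*(m:ℝ)-4)) *
            Real.exp (6 * lam * ((m:ℝ)+1)))) * lam^2 := by ring
      _ ≤ (lam^3 * (Real.exp (lam * (6*(m:ℝ)-4)) * Real.exp (lam * (6*(m:ℝ)-4)) *
            Real.exp (6 * lam * ((m:ℝ)+1)))) * Real.exp (2*lam) :=
          mul_le_mul_of_nonneg_left hlam2 (by positivity)
      _ = lam^3 * Real.exp (18 * lam * (m:ℝ)) := by rw [hE3]; ring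
  calc τ * (σ * (σ-1) * u ^ (σ-2) * (16/T^2)) *
        (lam * Real.exp (6 * lam * ((m:ℝ) + 1)) - Real.exp (lam * (p + 6*(m:ℝ))))
      ≤ τ * (σ * (σ-1) * u ^ (σ-2) * (16/T^2)) * (lam * Real.exp (6 * lam * ((m:ℝ) + 1))) :=
        mul_le_mul_of_nonneg_left hF hθnn
    _ ≤ τ * (σ * σ * 1 * (16/T^2)) * (lam * Real.exp (6 * lam * ((m:ℝ) + 1))) :=
        mul_le_mul_of_nonneg_right
          (mul_le_mul_of_nonneg_left key (by linarith)) hE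
    _ = (16/T^2) * τ^3 * (lam^5 * (Real.exp (lam * (6*(m:ℝ)-4)) * Real.exp (lam * (6*(m:ℝ)-4)) *
          Real.exp (6 * lam * ((m:ℝ)+1)))) := by rw [hσ]; ring
    _ ≤ (16/T^2) * τ^3 * (lam^3 * Real.exp (18 * lam * (m:ℝ))) :=
        mul_le_mul_of_nonneg_left hkey (by positivity)
    _ = (16 / T ^ 2) * τ ^ 3 * lam ^ 3 * Real.exp (18 * lam * (m : ℝ)) := by ring
end

section
/- Let n ≥ 1, let ψ : ℝⁿ → ℝ be continuously differentiable with 0 ≤ ψ(x) ≤ 1 and |∇ψ(x)| ≤ K for all x and some K > 0, let m ≥ 1 be an integer and λ ≥ 1, and set ξ(x) = exp(λ(ψ(x) + 6m)) and φ(x) = ξ(x) − λ·exp(6λ(m+1)). Then there exists a constant C > 0, depending only on λ, m and K, such that for all s > 0 and h ∈ (0,1] with s·h ≤ 1, every x ∈ ℝⁿ and every i ∈ {1,…,n}: exp(s·φ(x))·|D_i(exp(−s·φ))(x)| ≤ C·s·ξ(x), where D_i f(x) = (f(x + (h/2)e_i) − f(x − (h/2)e_i))/h. -/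
/-- Discrete difference operator in direction `i` with mesh size `h`. -/
noncomputable def Dop {n : ℕ} (h : ℝ) (i : Fin n) (f : (Fin n → ℝ) → ℝ)
    (x : Fin n → ℝ) : ℝ :=
  (f (x + Pi.single i (h / 2)) - f (x - Pi.single i (h / 2))) / h

/-- The Carleman weight `ξ(x) = exp(λ(ψ(x) + 6m))`. -/
noncomputable def xiW {n : ℕ} (lam : ℝ) (m : ℕ) (ψ : (Fin n → ℝ) → ℝ)
    (x : Fin n → ℝ) : ℝ :=
  Real.exp (lam * (ψ x + 6 * (m : ℝ)))

/-- The Carleman weight `φ(x) = ξ(x) − λ·exp(6λ(m+1))`. -/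
noncomputable def phiW {n : ℕ} (lam : ℝ) (m : ℕ) (ψ : (Fin n → ℝ) → ℝ)
    (x : Fin n → ℝ) : ℝ :=
  xiW lam m ψ x - lam * Real.exp (6 * lam * ((m : ℝ) + 1))

/-- Mean value bound for exp on a symmetric interval. -/
lemma exp_lip (A B M : ℝ) (hA : |A| ≤ M) (hB : |B| ≤ M) :
    |Real.exp A - Real.exp B| ≤ Real.exp M * |A - B| := by
  have hconv : Convex ℝ (Set.Icc (-M) M) := convex_Icc _ _
  have hd : ∀ y ∈ Set.Icc (-M) M,
      HasDerivWithinAt Real.exp (Real.exp y) (Set.Icc (-M) M) y := fun y _ =>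
    (Real.hasDerivAt_exp y).hasDerivWithinAt
  have hbd : ∀ y ∈ Set.Icc (-M) M, ‖Real.exp y‖ ≤ Real.exp M := fun y hy => by
    rw [Real.norm_eq_abs, abs_of_pos (Real.exp_pos y)]
    exact Real.exp_le_exp.2 hy.2
  have := hconv.norm_image_sub_le_of_norm_hasDerivWithin_le hd hbd
    (abs_le.1 hB) (abs_le.1 hA)
  simpa [Real.norm_eq_abs] using this

theorem stmt13 (m : ℕ) (hm : 1 ≤ m) (lam K : ℝ) (hlam : 1 ≤ lam) (hK : 0 < K) :
    ∃ C > 0, ∀ (n : ℕ), 1 ≤ n → ∀ ψ : (Fin n → ℝ) → ℝ,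
      ContDiff ℝ 1 ψ → (∀ x, 0 ≤ ψ x ∧ ψ x ≤ 1) → (∀ x, ‖fderiv ℝ ψ x‖ ≤ K) →
      ∀ s h : ℝ, 0 < s → 0 < h → h ≤ 1 → s * h ≤ 1 →
      ∀ (x : Fin n → ℝ) (i : Fin n),
        Real.exp (s * phiW lam m ψ x) *
            |Dop h i (fun y => Real.exp (-(s * phiW lam m ψ y))) x|
          ≤ C * s * xiW lam m ψ x := by
  have hlam0 : (0:ℝ) < lam := lt_of_lt_of_le one_pos hlam
  set L : ℝ := lam * K * Real.exp (lam * (1 + 6 * m)) with hLdef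
  have hL0 : 0 < L := by positivity
  refine ⟨L * Real.exp (L / 2), by positivity, ?_⟩
  intro n hn ψ hψ hψ01 hψK s h hs hh hh1 hsh x i
  -- Lipschitz bound for xiW
  have hxiLip : ∀ y z : Fin n → ℝ, |xiW lam m ψ y - xiW lam m ψ z| ≤ L * ‖y - z‖ := by
    intro y z
    have hd : ∀ w : Fin n → ℝ, HasFDerivAt (xiW lam m ψ)
        ((Real.exp (lam * (ψ w + 6 * (m:ℝ)))) • (lam • fderiv ℝ ψ w)) w := by
      intro w
      have h1 : HasFDerivAt ψ (fderiv ℝ ψ w) w :=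
        (hψ.differentiable one_ne_zero w).hasFDerivAt
      have h2 : HasFDerivAt (fun y => lam * (ψ y + 6 * (m:ℝ)))
          (lam • fderiv ℝ ψ w) w := by
        simpa using ((h1.add_const (6 * (m:ℝ))).const_mul lam)
      exact h2.exp
    have hbd : ∀ w : Fin n → ℝ,
        ‖(Real.exp (lam * (ψ w + 6 * (m:ℝ)))) • (lam • fderiv ℝ ψ w)‖ ≤ L := by
      intro w
      rw [norm_smul, norm_smul]
      have he : ‖Real.exp (lam * (ψ w + 6 * (m:ℝ)))‖ ≤ Real.exp (lam * (1 + 6 * m)) := by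
        rw [Real.norm_eq_abs, abs_of_pos (Real.exp_pos _)]
        apply Real.exp_le_exp.2
        have := (hψ01 w).2
        nlinarith [hlam0]
      calc ‖Real.exp (lam * (ψ w + 6 * (m:ℝ)))‖ * (‖lam‖ * ‖fderiv ℝ ψ w‖)
          ≤ Real.exp (lam * (1 + 6 * m)) * (lam * K) := by
            apply mul_le_mul he ?_ (by positivity) (Real.exp_pos _).le
            rw [Real.norm_eq_abs, abs_of_pos hlam0]
            exact mul_le_mul_of_nonneg_left (hψK w) hlam0.le
        _ = L := by rw [hLdef]; ring
    have := (convex_univ : Convex ℝ (Set.univ : Set (Fin n → ℝ))).norm_image_sub_le_of_norm_hasFDerivWithin_le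
      (f := xiW lam m ψ)
      (f' := fun w => (Real.exp (lam * (ψ w + 6 * (m:ℝ)))) • (lam • fderiv ℝ ψ w))
      (fun w _ => (hd w).hasFDerivWithinAt) (fun w _ => hbd w)
      (Set.mem_univ z) (Set.mem_univ y)
    simpa [Real.norm_eq_abs] using this
  set xp := x + Pi.single i (h / 2) with hxp
  set xm := x - Pi.single i (h / 2) with hxm
  have hnorm : ‖Pi.single (M := fun _ : Fin n => ℝ) i (h / 2)‖ = h / 2 := by
    rw [Pi.norm_single, Real.norm_eq_abs, abs_of_pos (by linarith)]
  set A := s * (xiW lam m ψ x - xiW lam m ψ xp) with hA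
  set B := s * (xiW lam m ψ x - xiW lam m ψ xm) with hB
  have habsA' : |A| ≤ s * L * h / 2 := by
    rw [hA, abs_mul, abs_of_pos hs]
    have h1 : |xiW lam m ψ x - xiW lam m ψ xp| ≤ L * (h / 2) := by
      have := hxiLip x xp
      rwa [show x - xp = -Pi.single i (h / 2) by rw [hxp]; abel, norm_neg, hnorm] at this
    calc s * |xiW lam m ψ x - xiW lam m ψ xp| ≤ s * (L * (h / 2)) :=
          mul_le_mul_of_nonneg_left h1 hs.le
      _ = s * L * h / 2 := by ring
  have habsB' : |B| ≤ s * L * h / 2 := by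
    rw [hB, abs_mul, abs_of_pos hs]
    have h1 : |xiW lam m ψ x - xiW lam m ψ xm| ≤ L * (h / 2) := by
      have := hxiLip x xm
      rwa [show x - xm = Pi.single i (h / 2) by rw [hxm]; abel, hnorm] at this
    calc s * |xiW lam m ψ x - xiW lam m ψ xm| ≤ s * (L * (h / 2)) :=
          mul_le_mul_of_nonneg_left h1 hs.le
      _ = s * L * h / 2 := by ring
  have hhalf : s * L * h / 2 ≤ L / 2 := by nlinarith
  have habsA : |A| ≤ L / 2 := le_trans habsA' hhalf
  have habsB : |B| ≤ L / 2 := le_trans habsB' hhalf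
  -- Rewrite the left-hand side
  have hphi : ∀ y : Fin n → ℝ, s * phiW lam m ψ x - s * phiW lam m ψ y
      = s * (xiW lam m ψ x - xiW lam m ψ y) := by
    intro y; simp only [phiW]; ring
  have hLHS : Real.exp (s * phiW lam m ψ x) *
      |Dop h i (fun y => Real.exp (-(s * phiW lam m ψ y))) x|
      = |Real.exp A - Real.exp B| / h := by
    rw [Dop, abs_div, abs_of_pos hh, ← mul_div_assoc]
    congr 1
    rw [← abs_of_pos (Real.exp_pos (s * phiW lam m ψ x)), ← abs_mul, mul_sub,
      ← Real.exp_add, ← Real.exp_add]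
    simp only [← hxp, ← hxm]
    rw [show s * phiW lam m ψ x + -(s * phiW lam m ψ xp) = A by rw [hA, ← hphi xp]; ring,
      show s * phiW lam m ψ x + -(s * phiW lam m ψ xm) = B by rw [hB, ← hphi xm]; ring]
  rw [hLHS]
  have hdiff : |Real.exp A - Real.exp B| ≤ Real.exp (L / 2) * (s * L * h) := by
    calc |Real.exp A - Real.exp B| ≤ Real.exp (L / 2) * |A - B| :=
          exp_lip A B (L / 2) habsA habsB
      _ ≤ Real.exp (L / 2) * (s * L * h) := by
          apply mul_le_mul_of_nonneg_left _ (Real.exp_pos _).le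
          calc |A - B| ≤ |A| + |B| := abs_sub A B
            _ ≤ s * L * h / 2 + s * L * h / 2 := add_le_add habsA' habsB'
            _ = s * L * h := by ring
  have hxi1 : 1 ≤ xiW lam m ψ x := by
    rw [xiW]
    apply Real.one_le_exp
    have := (hψ01 x).1
    positivity
  calc |Real.exp A - Real.exp B| / h ≤ Real.exp (L / 2) * (s * L * h) / h := by
        exact div_le_div_of_nonneg_right hdiff hh.le
    _ = L * Real.exp (L / 2) * s := by field_simp
    _ ≤ L * Real.exp (L / 2) * s * xiW lam m ψ x := by
        nth_rewrite 1 [← mul_one (L * Real.exp (L / 2) * s)]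
        apply mul_le_mul_of_nonneg_left hxi1 (by positivity)
end

section
/- Let n ≥ 1, let ψ : ℝⁿ → ℝ be twice continuously differentiable with 0 ≤ ψ(x) ≤ 1, |∇ψ(x)| ≤ K and |∂²_{x_i x_j}ψ(x)| ≤ K for all x, i, j and some K > 0, let m ≥ 1 be an integer and λ ≥ 1, and set ξ(x) = exp(λ(ψ(x) + 6m)) and φ(x) = ξ(x) − λ·exp(6λ(m+1)). Then there exists a constant C > 0, depending only on λ, m and K, such that for all s ≥ 1 and h ∈ (0,1] with s·h ≤ 1, every x ∈ ℝⁿ and every i ∈ {1,…,n}: exp(s·φ(x))·|D_i(D_i(exp(−s·φ)))(x)| ≤ C·s²·ξ(x)², where D_i f(x) = (f(x + (h/2)e_i) − f(x − (h/2)e_i))/h, so that D_i(D_i f)(x) = (f(x + h e_i) − 2f(x) + f(x − h e_i))/h². -/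
set_option maxHeartbeats 2000000 in
/-- For `ψ` a `C²` cutoff valued in `[0,1]` with first and second
derivatives bounded by `K`, `m ≥ 1`, `λ ≥ 1`, and the weights `ξ = exp(λ(ψ + 6m))`,
`φ = ξ − λ·exp(6λ(m+1))`, there is `C > 0` depending only on `λ, m, K` such that
for all `s ≥ 1`, `h ∈ (0,1]` with `s·h ≤ 1`, all `x` and all directions `i`,
`exp(sφ(x))·|D_i(D_i(exp(−sφ)))(x)| ≤ C·s²·ξ(x)²`. -/
theorem stmt14 (m : ℕ) (hm : 1 ≤ m) (lam K : ℝ) (hlam : 1 ≤ lam) (hK : 0 < K) :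
    ∃ C > 0, ∀ (n : ℕ), 1 ≤ n → ∀ ψ : (Fin n → ℝ) → ℝ,
      ContDiff ℝ 2 ψ → (∀ x, 0 ≤ ψ x ∧ ψ x ≤ 1) →
      (∀ x, ‖fderiv ℝ ψ x‖ ≤ K) →
      (∀ x, ‖iteratedFDeriv ℝ 2 ψ x‖ ≤ K) →
      ∀ s h : ℝ, 1 ≤ s → 0 < h → h ≤ 1 → s * h ≤ 1 →
      ∀ (x : Fin n → ℝ) (i : Fin n),
        Real.exp (s * phiW lam m ψ x) *
            |Dop h i (Dop h i (fun y => Real.exp (-(s * phiW lam m ψ y)))) x|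
          ≤ C * s ^ 2 * (xiW lam m ψ x) ^ 2 := by
  have hlam0 : (0:ℝ) < lam := lt_of_lt_of_le one_pos hlam
  set A : ℝ := Real.exp (lam * (1 + 6 * m)) with hAdef
  have hA0 : 0 < A := Real.exp_pos _
  set L : ℝ := lam * K * A with hLdef
  have hL0 : 0 < L := by positivity
  set B0 : ℝ := lam * K * A * (1 + lam * K + lam * K * A) * Real.exp (lam * K * A)
    with hB0def
  have hB00 : 0 < B0 := by positivity
  refine ⟨B0, hB00, ?_⟩
  intro n hn ψ hψ hψ01 hψd1 hψd2 s h hs hh0 hh1 hsh x i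
  have hs0 : (0:ℝ) < s := lt_of_lt_of_le one_pos hs
  -- the unit direction
  set e : Fin n → ℝ := Pi.single i 1 with hedef
  have he : ‖e‖ = 1 := by
    rw [hedef, Pi.norm_single, norm_one]
  have hsing : ∀ a : ℝ, Pi.single i a = a • e := by
    intro a
    rw [hedef, ← Pi.single_smul', smul_eq_mul, mul_one]
  -- the line through x in direction e
  set c : ℝ → (Fin n → ℝ) := fun t => x + t • e with hcdef
  have hc0 : c 0 = x := by simp [hcdef]
  have hc : ∀ t : ℝ, HasDerivAt c e t := by
    intro t
    have h1 : HasDerivAt (fun t : ℝ => t • e) ((1:ℝ) • e) t :=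
      (hasDerivAt_id t).smul_const e
    simpa [hcdef] using h1.const_add x
  have hdψ : Differentiable ℝ ψ := hψ.differentiable (by norm_num)
  -- first derivative of ψ along the line
  set w : ℝ → ℝ := fun t => ψ (c t) with hwdef
  set w' : ℝ → ℝ := fun t => fderiv ℝ ψ (c t) e with hw'def
  have hw : ∀ t : ℝ, HasDerivAt w (w' t) t := by
    intro t
    exact (hdψ (c t)).hasFDerivAt.comp_hasDerivAt t (hc t)
  have hw'bound : ∀ t : ℝ, |w' t| ≤ K := by
    intro t
    have h1 : |w' t| ≤ ‖fderiv ℝ ψ (c t)‖ * ‖e‖ :=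
      (fderiv ℝ ψ (c t)).le_opNorm e
    rw [he, mul_one] at h1
    exact h1.trans (hψd1 (c t))
  -- second derivative of ψ along the line
  have hdF₁ : Differentiable ℝ (fderiv ℝ ψ) := by
    have : ContDiff ℝ 1 (fderiv ℝ ψ) := hψ.fderiv_right (by norm_num)
    exact this.differentiable (by norm_num)
  set w'' : ℝ → ℝ := fun t => fderiv ℝ (fderiv ℝ ψ) (c t) e e with hw''def
  have hw' : ∀ t : ℝ, HasDerivAt w' (w'' t) t := by
    intro t
    have h1 : HasDerivAt (fun t => fderiv ℝ ψ (c t)) (fderiv ℝ (fderiv ℝ ψ) (c t) e) t :=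
      (hdF₁ (c t)).hasFDerivAt.comp_hasDerivAt t (hc t)
    have h2 := h1.clm_apply (hasDerivAt_const t e)
    simpa [hw'def] using h2
  have hw''bound : ∀ t : ℝ, |w'' t| ≤ K := by
    intro t
    have h1 : w'' t = iteratedFDeriv ℝ 2 ψ (c t) ![e, e] := by
      rw [iteratedFDeriv_two_apply]
      simp [hw''def]
    have h2 : |iteratedFDeriv ℝ 2 ψ (c t) ![e, e]| ≤
        ‖iteratedFDeriv ℝ 2 ψ (c t)‖ * ∏ j : Fin 2, ‖(![e, e] : Fin 2 → (Fin n → ℝ)) j‖ :=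
      (iteratedFDeriv ℝ 2 ψ (c t)).le_opNorm _
    have h3 : ∏ j : Fin 2, ‖(![e, e] : Fin 2 → (Fin n → ℝ)) j‖ = 1 := by
      simp [Fin.prod_univ_two, he]
    rw [h1]
    calc |iteratedFDeriv ℝ 2 ψ (c t) ![e, e]| ≤ ‖iteratedFDeriv ℝ 2 ψ (c t)‖ * 1 := by
          rw [← h3]; exact h2
      _ ≤ K := by rw [mul_one]; exact hψd2 (c t)
  -- the weight ξ along the line
  set V : ℝ → ℝ := fun t => Real.exp (lam * (w t + 6 * m)) with hVdef
  set V' : ℝ → ℝ := fun t => V t * (lam * w' t) with hV'def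
  have hV : ∀ t : ℝ, HasDerivAt V (V' t) t := by
    intro t
    have h1 : HasDerivAt (fun t => lam * (w t + 6 * m)) (lam * w' t) t :=
      ((hw t).add_const _).const_mul lam
    exact h1.exp
  have hVpos : ∀ t, 0 < V t := fun t => Real.exp_pos _
  have hVle : ∀ t, V t ≤ A := by
    intro t
    apply Real.exp_le_exp.2
    have h1 : w t ≤ 1 := (hψ01 (c t)).2
    have h6 : (1:ℝ) ≤ 6 * m := by
      have : (1:ℝ) ≤ (m:ℝ) := by exact_mod_cast hm
      nlinarith
    nlinarith
  have hV'bound : ∀ t, |V' t| ≤ L := by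
    intro t
    rw [hV'def]
    have h1 : |V t * (lam * w' t)| = V t * (lam * |w' t|) := by
      rw [abs_mul (V t) (lam * w' t), abs_mul lam (w' t), abs_of_pos (hVpos t),
        abs_of_pos hlam0]
    rw [h1, hLdef]
    calc V t * (lam * |w' t|)
        ≤ A * (lam * K) := mul_le_mul (hVle t)
          (mul_le_mul_of_nonneg_left (hw'bound t) hlam0.le) (by positivity) hA0.le
      _ = lam * K * A := by ring
  set V'' : ℝ → ℝ := fun t => V' t * (lam * w' t) + V t * (lam * w'' t) with hV''def
  have hV'd : ∀ t : ℝ, HasDerivAt V' (V'' t) t := by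
    intro t
    exact (hV t).mul ((hw' t).const_mul lam)
  have hV''bound : ∀ t, |V'' t| ≤ lam * K * A * (1 + lam * K) := by
    intro t
    have e1 : |V' t * (lam * w' t)| = |V' t| * (lam * |w' t|) := by
      rw [abs_mul (V' t) (lam * w' t), abs_mul lam (w' t), abs_of_pos hlam0]
    have e2 : |V t * (lam * w'' t)| = V t * (lam * |w'' t|) := by
      rw [abs_mul (V t) (lam * w'' t), abs_mul lam (w'' t), abs_of_pos (hVpos t),
        abs_of_pos hlam0]
    have h1 : |V'' t| ≤ |V' t| * (lam * |w' t|) + V t * (lam * |w'' t|) := by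
      rw [hV''def]
      calc |V' t * (lam * w' t) + V t * (lam * w'' t)|
          ≤ |V' t * (lam * w' t)| + |V t * (lam * w'' t)| := abs_add_le _ _
        _ = |V' t| * (lam * |w' t|) + V t * (lam * |w'' t|) := by rw [e1, e2]
    have h2 := hV'bound t
    have h3 := hw'bound t
    have h4 := hw''bound t
    have h5 := hVle t
    have h6 := hVpos t
    have h7 : |V' t| * (lam * |w' t|) ≤ L * (lam * K) := by
      apply mul_le_mul h2 _ (by positivity) hL0.le
      exact mul_le_mul_of_nonneg_left h3 hlam0.le
    have h8 : V t * (lam * |w'' t|) ≤ A * (lam * K) := by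
      apply mul_le_mul h5 _ (by positivity) hA0.le
      exact mul_le_mul_of_nonneg_left h4 hlam0.le
    rw [hLdef] at h7
    nlinarith [abs_nonneg (V'' t)]
  -- conjugated function G
  set G : ℝ → ℝ := fun t => Real.exp (s * (V 0 - V t)) with hGdef
  set G' : ℝ → ℝ := fun t => G t * (s * (0 - V' t)) with hG'def
  have hG : ∀ t : ℝ, HasDerivAt G (G' t) t := by
    intro t
    have h1 : HasDerivAt (fun t => s * (V 0 - V t)) (s * (0 - V' t)) t :=
      ((hasDerivAt_const t (V 0)).sub (hV t)).const_mul s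
    exact h1.exp
  set G'' : ℝ → ℝ := fun t => G' t * (s * (0 - V' t)) + G t * (s * (0 - V'' t))
    with hG''def
  have hG'd : ∀ t : ℝ, HasDerivAt G' (G'' t) t := by
    intro t
    exact (hG t).mul (((hasDerivAt_const t (0:ℝ)).sub (hV'd t)).const_mul s)
  -- bound on G on [-h, h]
  set I : Set ℝ := Set.Icc (-h) h with hIdef
  have hIconv : Convex ℝ I := convex_Icc _ _
  have hVlip : ∀ t ∈ I, |V t - V 0| ≤ L * |t| := by
    intro t ht
    have h0I : (0:ℝ) ∈ I := Set.mem_Icc.2 ⟨by linarith, hh0.le⟩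
    have := hIconv.norm_image_sub_le_of_norm_hasDerivWithin_le
      (f := V) (f' := V') (fun u hu => (hV u).hasDerivWithinAt)
      (fun u hu => hV'bound u) h0I ht
    simpa using this
  have hGbound : ∀ t ∈ I, G t ≤ Real.exp L := by
    intro t ht
    rw [hGdef]
    apply Real.exp_le_exp.2
    have h1 : s * (V 0 - V t) ≤ s * |V t - V 0| := by
      have : V 0 - V t ≤ |V t - V 0| := by
        rw [abs_sub_comm]; exact le_abs_self _
      exact mul_le_mul_of_nonneg_left this hs0.le
    have h2 : s * |V t - V 0| ≤ s * (L * |t|) :=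
      mul_le_mul_of_nonneg_left (hVlip t ht) hs0.le
    have h3 : |t| ≤ h := by
      rw [abs_le]; exact ht
    have h4 : s * (L * |t|) ≤ L * (s * h) := by
      have := mul_le_mul_of_nonneg_left h3 hs0.le
      nlinarith [abs_nonneg t]
    have h5 : L * (s * h) ≤ L := by nlinarith
    linarith
  have hG'bound : ∀ t ∈ I, |G' t| ≤ s * L * Real.exp L := by
    intro t ht
    rw [hG'def]
    have hGpos : (0:ℝ) < G t := Real.exp_pos _
    have h1 : |G t * (s * (0 - V' t))| = G t * (s * |V' t|) := by
      rw [zero_sub, abs_mul (G t) (s * -V' t), abs_mul s (-V' t), abs_neg,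
        abs_of_pos hGpos, abs_of_pos hs0]
    rw [h1]
    calc G t * (s * |V' t|)
        ≤ Real.exp L * (s * L) := mul_le_mul (hGbound t ht)
          (mul_le_mul_of_nonneg_left (hV'bound t) hs0.le) (by positivity) (Real.exp_pos _).le
      _ = s * L * Real.exp L := by ring
  have hG''bound : ∀ t ∈ I, |G'' t| ≤ s ^ 2 * B0 := by
    intro t ht
    have hGpos : (0:ℝ) < G t := Real.exp_pos _
    have e1 : |G' t * (s * (0 - V' t))| = |G' t| * (s * |V' t|) := by
      rw [zero_sub, abs_mul (G' t) (s * -V' t), abs_mul s (-V' t), abs_neg, abs_of_pos hs0]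
    have e2 : |G t * (s * (0 - V'' t))| = G t * (s * |V'' t|) := by
      rw [zero_sub, abs_mul (G t) (s * -V'' t), abs_mul s (-V'' t), abs_neg,
        abs_of_pos hGpos, abs_of_pos hs0]
    have h1 : |G'' t| ≤ |G' t| * (s * |V' t|) + G t * (s * |V'' t|) := by
      rw [hG''def]
      calc |G' t * (s * (0 - V' t)) + G t * (s * (0 - V'' t))|
          ≤ |G' t * (s * (0 - V' t))| + |G t * (s * (0 - V'' t))| := abs_add_le _ _
        _ = |G' t| * (s * |V' t|) + G t * (s * |V'' t|) := by rw [e1, e2]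
    have h2 := hG'bound t ht
    have h3 := hGbound t ht
    have h4 := hV'bound t
    have h5 := hV''bound t
    have h6 : (0:ℝ) < G t := Real.exp_pos _
    have h7 : |G' t| * (s * |V' t|) ≤ (s * L * Real.exp L) * (s * L) := by
      apply mul_le_mul h2 _ (by positivity) (by positivity)
      exact mul_le_mul_of_nonneg_left h4 hs0.le
    have h8 : G t * (s * |V'' t|) ≤ Real.exp L * (s * (lam * K * A * (1 + lam * K))) := by
      apply mul_le_mul h3 _ (by positivity) (Real.exp_pos _).le
      exact mul_le_mul_of_nonneg_left h5 hs0.le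
    have h9 : (s * L * Real.exp L) * (s * L) + Real.exp L * (s * (lam * K * A * (1 + lam * K)))
        ≤ s ^ 2 * B0 := by
      have hs1 : s ≤ s ^ 2 := by nlinarith
      have hE : (0:ℝ) < Real.exp L := Real.exp_pos _
      have h10 : s * (lam * K * A * (1 + lam * K)) * Real.exp L
          ≤ s ^ 2 * (lam * K * A * (1 + lam * K)) * Real.exp L := by
        apply mul_le_mul_of_nonneg_right _ hE.le
        exact mul_le_mul_of_nonneg_right hs1 (by positivity)
      calc (s * L * Real.exp L) * (s * L) + Real.exp L * (s * (lam * K * A * (1 + lam * K)))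
          = s ^ 2 * (L * L) * Real.exp L
            + s * (lam * K * A * (1 + lam * K)) * Real.exp L := by ring
        _ ≤ s ^ 2 * (L * L) * Real.exp L
            + s ^ 2 * (lam * K * A * (1 + lam * K)) * Real.exp L := by linarith
        _ = s ^ 2 * B0 := by rw [hB0def, hLdef]; ring
    linarith
  -- double mean value theorem
  set H : ℝ → ℝ := fun t => G t - G (t - h) with hHdef
  set H' : ℝ → ℝ := fun t => G' t - G' (t - h) with hH'def
  have hH : ∀ t : ℝ, HasDerivAt H (H' t) t := by
    intro t
    have h1 : HasDerivAt (fun t => G (t - h)) (G' (t - h)) t := by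
      have := (hG (t - h)).comp t ((hasDerivAt_id t).sub_const h)
      simp only [mul_one] at this
      exact this
    exact (hG t).sub h1
  have hH'bound : ∀ t ∈ Set.Icc (0:ℝ) h, |H' t| ≤ s ^ 2 * B0 * h := by
    intro t ht
    have htI : t ∈ I := ⟨by linarith [ht.1, hh0], ht.2⟩
    have hthI : t - h ∈ I := ⟨by linarith [ht.1], by linarith [ht.2, hh0]⟩
    have := hIconv.norm_image_sub_le_of_norm_hasDerivWithin_le
      (f := G') (f' := G'') (fun u hu => (hG'd u).hasDerivWithinAt)
      (fun u hu => hG''bound u hu) hthI htI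
    rw [hH'def]
    have heq : |t - (t - h)| = h := by
      rw [show t - (t - h) = h by ring, abs_of_pos hh0]
    simp only [Real.norm_eq_abs] at this
    rw [heq] at this
    exact this
  have hHfinal : |H h - H 0| ≤ s ^ 2 * B0 * h * h := by
    have := (convex_Icc (0:ℝ) h).norm_image_sub_le_of_norm_hasDerivWithin_le
      (f := H) (f' := H') (fun u hu => (hH u).hasDerivWithinAt)
      hH'bound (Set.left_mem_Icc.2 hh0.le) (Set.right_mem_Icc.2 hh0.le)
    simp only [Real.norm_eq_abs, sub_zero] at this
    rw [abs_of_pos hh0] at this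
    exact this
  -- identify the discrete second difference with G
  have hsingle_eq : ∀ (a b : ℝ), x + Pi.single i a + Pi.single i b = c (a + b) := by
    intro a b
    rw [hsing a, hsing b]
    show x + a • e + b • e = x + (a + b) • e
    module
  have hsingle_eq' : ∀ (a b : ℝ), x - Pi.single i a + Pi.single i b = c (b - a) := by
    intro a b
    rw [hsing a, hsing b]
    show x - a • e + b • e = x + (b - a) • e
    module
  have hsingle_eq'' : ∀ (a b : ℝ), x + Pi.single i a - Pi.single i b = c (a - b) := by
    intro a b
    rw [hsing a, hsing b]
    show x + a • e - b • e = x + (a - b) • e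
    module
  have hsingle_eq''' : ∀ (a b : ℝ), x - Pi.single i a - Pi.single i b = c (-(a + b)) := by
    intro a b
    rw [hsing a, hsing b]
    show x - a • e - b • e = x + (-(a + b)) • e
    module
  set ρ : (Fin n → ℝ) → ℝ := fun y => Real.exp (-(s * phiW lam m ψ y)) with hρdef
  have hDD : Dop h i (Dop h i ρ) x = (ρ (c h) - 2 * ρ (c 0) + ρ (c (-h))) / h ^ 2 := by
    simp only [Dop]
    rw [hsingle_eq (h/2) (h/2), hsingle_eq'' (h/2) (h/2), hsingle_eq' (h/2) (h/2),
      hsingle_eq''' (h/2) (h/2)]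
    have e1 : h / 2 + h / 2 = h := by ring
    have e2 : h / 2 - h / 2 = (0:ℝ) := by ring
    rw [e1, e2]
    field_simp
    ring
  -- relate r·ρ(c t) to G t
  have hV0 : V 0 = xiW lam m ψ x := by
    show Real.exp (lam * (ψ (c 0) + 6 * m)) = _
    rw [hc0, xiW]
  have hphix : phiW lam m ψ x = V 0 - lam * Real.exp (6 * lam * ((m:ℝ) + 1)) := by
    rw [hV0, phiW]
  have hphit : ∀ t : ℝ, phiW lam m ψ (c t) = V t - lam * Real.exp (6 * lam * ((m:ℝ) + 1)) :=
    fun t => rfl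
  have hrρ : ∀ t : ℝ, Real.exp (s * phiW lam m ψ x) * ρ (c t) = G t := by
    intro t
    show Real.exp (s * phiW lam m ψ x) * Real.exp (-(s * phiW lam m ψ (c t)))
      = Real.exp (s * (V 0 - V t))
    rw [← Real.exp_add]
    congr 1
    rw [hphix, hphit t]
    ring
  -- conclude
  have hmain : Real.exp (s * phiW lam m ψ x) * |Dop h i (Dop h i ρ) x| ≤ s ^ 2 * B0 := by
    rw [hDD]
    have hexp0 : (0:ℝ) < Real.exp (s * phiW lam m ψ x) := Real.exp_pos _
    rw [abs_div, abs_of_pos (by positivity : (0:ℝ) < h ^ 2)]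
    rw [← mul_div_assoc]
    rw [div_le_iff₀ (by positivity : (0:ℝ) < h ^ 2)]
    have h1 : Real.exp (s * phiW lam m ψ x) * |ρ (c h) - 2 * ρ (c 0) + ρ (c (-h))|
        = |G h - 2 * G 0 + G (-h)| := by
      rw [← abs_of_pos hexp0, ← abs_mul]
      congr 1
      rw [mul_add, mul_sub]
      rw [hrρ h, hrρ (-h), show Real.exp (s * phiW lam m ψ x) * (2 * ρ (c 0))
        = 2 * (Real.exp (s * phiW lam m ψ x) * ρ (c 0)) by ring, hrρ 0]
    rw [h1]
    have h2 : G h - 2 * G 0 + G (-h) = H h - H 0 := by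
      show _ = (G h - G (h - h)) - (G 0 - G (0 - h))
      rw [sub_self, zero_sub]
      ring
    rw [h2]
    calc |H h - H 0| ≤ s ^ 2 * B0 * h * h := hHfinal
      _ = s ^ 2 * B0 * h ^ 2 := by ring
  have hxi1 : 1 ≤ xiW lam m ψ x := by
    rw [xiW]
    have := (hψ01 x).1
    have h6 : (0:ℝ) ≤ 6 * m := by positivity
    calc (1:ℝ) = Real.exp 0 := by rw [Real.exp_zero]
      _ ≤ Real.exp (lam * (ψ x + 6 * m)) := Real.exp_le_exp.2 (by nlinarith)
  calc Real.exp (s * phiW lam m ψ x) * |Dop h i (Dop h i ρ) x| ≤ s ^ 2 * B0 := hmain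
    _ = B0 * s ^ 2 * 1 := by ring
    _ ≤ B0 * s ^ 2 * (xiW lam m ψ x) ^ 2 := by
        apply mul_le_mul_of_nonneg_left _ (by positivity)
        nlinarith
end
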